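/- For every prime p ≥ 5, the number L^{(3)}(p) of distinct roots of ss_p^{(3)}(X) in 𝔽_p satisfies L^{(3)}(p) = N₁(p, ⌊p/3⌋) + δ. -/

import Mathlib

open Polynomial

noncomputable section

/-- The class number h(√-d) of the imaginary quadratic field ℚ(√-d),
realized as the subfield of ℂ generated by i·√d. -/
def classNumberSqrtNeg (d : ℕ) : ℕ :=
  haveI : FiniteDimensional ℚ (IntermediateField.adjoin ℚ {(Complex.I * Real.sqrt d : ℂ)}) :=
    IntermediateField.adjoin.finiteDimensional
      ⟨X ^ 2 + C (d : ℚ), monic_X_pow_add_C _ (by norm_num), by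
        have h : (Complex.I * (Real.sqrt d : ℂ)) ^ 2 = -(d : ℂ) := by
          rw [mul_pow, Complex.I_sq, ← Complex.ofReal_pow, Real.sq_sqrt (Nat.cast_nonneg d)]
          simp
        simp [h]⟩
  haveI : NumberField (IntermediateField.adjoin ℚ {(Complex.I * Real.sqrt d : ℂ)}) := ⟨⟩
  NumberField.classNumber (IntermediateField.adjoin ℚ {(Complex.I * Real.sqrt d : ℂ)})

variable (p : ℕ) [Fact p.Prime]

/-- ε = (1 - (-1|p))/2 -/
def eps : ℕ := ((1 - legendreSym p (-1)) / 2).toNat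
/-- δ = (1 - (-3|p))/2 -/
def del : ℕ := ((1 - legendreSym p (-3)) / 2).toNat
/-- ν = (1 - (-2|p))/2 -/
def nu : ℕ := ((1 - legendreSym p (-2)) / 2).toNat

/-- The Pochhammer symbol (x)_n = x(x+1)⋯(x+n-1) in 𝔽_p. -/
def poch (x : ZMod p) (n : ℕ) : ZMod p := (ascPochhammer (ZMod p) n).eval x

/-- The level-3 supersingular polynomial ss_p^{(3)}(X) ∈ 𝔽_p[X]:
Σ_{n=0}^{m} ((-m)_n (2/3-δ/3)_n / (n!)²) 27^n X^{m+δ-n}, with m = ⌊p/3⌋. -/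
def ss3Poly : (ZMod p)[X] :=
  ∑ n ∈ Finset.range (p / 3 + 1),
    C (poch p (-(p / 3 : ℕ) : ZMod p) n *
       poch p ((2 : ZMod p) / 3 - (del p : ZMod p) / 3) n /
       ((n.factorial : ZMod p)) ^ 2 * 27 ^ n) *
    X ^ (p / 3 + del p - n)

/-- L^{(3)}(p): the number of distinct roots of ss_p^{(3)}(X) in 𝔽_p. -/
def L3 : ℕ := (ss3Poly p).roots.toFinset.card

/-- W_m(X) = Σ_{r=0}^{m} C(m,r)² X^r ∈ ℤ[X]. -/
def W (m : ℕ) : ℤ[X] := ∑ r ∈ Finset.range (m + 1), C ((m.choose r : ℤ) ^ 2) * X ^ r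

/-- N₁(p,m): the number of distinct roots in 𝔽_p of W_m(X) reduced mod p. -/
def N1 (m : ℕ) : ℕ := (((W m).map (Int.castRingHom (ZMod p))).roots.toFinset.card)

/-! ### Auxiliary combinatorial identities -/

namespace SS3Aux

open Finset

lemma choose_swap (m r s : ℕ) :
    m.choose r * (m - r).choose s = m.choose s * (m - s).choose r := by
  rcases le_or_gt (r + s) m with h | h
  · have hr : r ≤ m := by omega
    have hs : s ≤ m := by omega
    have e1 := Nat.choose_mul_factorial_mul_factorial hr
    have e2 := Nat.choose_mul_factorial_mul_factorial (show s ≤ m - r by omega)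
    have e3 := Nat.choose_mul_factorial_mul_factorial hs
    have e4 := Nat.choose_mul_factorial_mul_factorial (show r ≤ m - s by omega)
    have h1 : m - s - r = m - r - s := by omega
    rw [h1] at e4
    apply Nat.eq_of_mul_eq_mul_right
      (Nat.mul_pos (Nat.mul_pos r.factorial_pos s.factorial_pos) (m - r - s).factorial_pos)
    calc m.choose r * (m - r).choose s * (r.factorial * s.factorial * (m - r - s).factorial)
        = m.choose r * r.factorial * ((m - r).choose s * s.factorial * (m - r - s).factorial) := by
          ring
      _ = m.factorial := by rw [e2, e1]
      _ = m.choose s * s.factorial * ((m - s).choose r * r.factorial * (m - r - s).factorial) := by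
          rw [e4, e3]
      _ = m.choose s * (m - s).choose r * (r.factorial * s.factorial * (m - r - s).factorial) := by
          ring
  · rcases le_or_gt r m with hr | hr
    · rcases le_or_gt s m with hs | hs
      · rw [Nat.choose_eq_zero_of_lt (show m - r < s by omega),
          Nat.choose_eq_zero_of_lt (show m - s < r by omega), mul_zero, mul_zero]
      · rw [Nat.choose_eq_zero_of_lt hs, Nat.choose_eq_zero_of_lt (show m - r < s by omega),
          mul_zero, zero_mul]
    · rw [Nat.choose_eq_zero_of_lt hr, Nat.choose_eq_zero_of_lt (show m - s < r by omega),
        zero_mul, mul_zero]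

lemma sum_choose_mul_choose (m n : ℕ) (hn : n ≤ m) :
    ∑ r ∈ range (m + 1), m.choose r * n.choose r = (m + n).choose n := by
  rw [Nat.add_choose_eq]
  rw [Finset.Nat.sum_antidiagonal_eq_sum_range_succ_mk]
  rw [← Finset.sum_subset (Finset.range_subset_range.2 (by omega : n + 1 ≤ m + 1))]
  · apply Finset.sum_congr rfl
    intro r hr
    rw [Finset.mem_range] at hr
    rw [Nat.choose_symm (by omega)]
  · intro r _ hr
    rw [Finset.mem_range] at hr
    rw [Nat.choose_eq_zero_of_lt (by omega : n < r), mul_zero]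

lemma key_identity (m n : ℕ) (hn : n ≤ m) :
    ∑ r ∈ range (m + 1), m.choose r ^ 2 * (m - r).choose (m - n) =
      m.choose n * (m + n).choose n := by
  have : ∀ r ∈ range (m + 1),
      m.choose r ^ 2 * (m - r).choose (m - n) = m.choose n * (m.choose r * n.choose r) := by
    intro r _
    rw [pow_two, mul_assoc, choose_swap m r (m - n), Nat.choose_symm hn,
      Nat.sub_sub_self hn]
    ring
  rw [Finset.sum_congr rfl this, ← Finset.mul_sum, sum_choose_mul_choose m n hn]

lemma const_identity {R : Type*} [CommRing R] (m k : ℕ) (hk : k ≤ m) (t : R) :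
    ∑ r ∈ range (m + 1), (m.choose r : R) ^ 2 * t ^ r * t ^ (m - r - k) * ((m - r).choose k : R)
      = ((m.choose (m - k) * (m + (m - k)).choose (m - k) : ℕ) : R) * t ^ (m - k) := by
  have step : ∀ r ∈ range (m + 1),
      (m.choose r : R) ^ 2 * t ^ r * t ^ (m - r - k) * ((m - r).choose k : R)
        = ((m.choose r ^ 2 * (m - r).choose k : ℕ) : R) * t ^ (m - k) := by
    intro r hr
    rw [mem_range] at hr
    rcases le_or_gt (r + k) m with h | h
    · have : t ^ r * t ^ (m - r - k) = t ^ (m - k) := by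
        rw [← pow_add]; congr 1; omega
      push_cast
      rw [mul_assoc ((m.choose r : R) ^ 2), this]; ring
    · rw [Nat.choose_eq_zero_of_lt (show m - r < k by omega)]
      push_cast
      ring
  rw [Finset.sum_congr rfl step, ← Finset.sum_mul, ← Nat.cast_sum]
  have h2 := key_identity m (m - k) (by omega)
  rw [Nat.sub_sub_self hk] at h2
  rw [h2]

lemma poly_identity {R : Type*} [CommRing R] (m : ℕ) :
    ∑ n ∈ range (m + 1),
        C (((m.choose n * (m + n).choose n : ℕ) : R) * (-27) ^ n) * X ^ (m - n)
      = ∑ r ∈ range (m + 1),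
        C ((m.choose r : R) ^ 2 * (-27) ^ r) * (X - C 27) ^ (m - r) := by
  have hsub : (X - C 27 : R[X]) = X + C (-27) := by rw [map_neg, sub_eq_add_neg]
  have expand : ∀ r ∈ range (m + 1),
      C ((m.choose r : R) ^ 2 * (-27) ^ r) * (X - C 27) ^ (m - r)
        = ∑ k ∈ range (m + 1),
            C ((m.choose r : R) ^ 2 * (-27) ^ r * (-27) ^ (m - r - k)
                * ((m - r).choose k : R)) * X ^ k := by
    intro r hr
    rw [mem_range] at hr
    rw [hsub, add_pow, Finset.mul_sum]
    rw [← Finset.sum_subset (Finset.range_subset_range.2 (by omega : m - r + 1 ≤ m + 1))]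
    · apply Finset.sum_congr rfl
      intro k hk
      rw [mem_range] at hk
      simp only [map_mul, map_pow, map_neg, map_natCast, map_ofNat]
      ring
    · intro k _ hk
      rw [mem_range] at hk
      rw [Nat.choose_eq_zero_of_lt (by omega : m - r < k)]
      simp
  rw [Finset.sum_congr rfl expand, Finset.sum_comm]
  rw [show ∑ n ∈ range (m + 1),
        C (((m.choose n * (m + n).choose n : ℕ) : R) * (-27) ^ n) * X ^ (m - n)
      = ∑ k ∈ range (m + 1),
        C (((m.choose (m - k) * (m + (m - k)).choose (m - k) : ℕ) : R) * (-27) ^ (m - k))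
          * X ^ k from
    Finset.sum_nbij' (fun n => m - n) (fun k => m - k)
      (fun n hn => by simp only [mem_range] at *; omega)
      (fun k hk => by simp only [mem_range] at *; omega)
      (fun n hn => by simp only [mem_range] at hn; omega)
      (fun k hk => by simp only [mem_range] at hk; omega)
      (fun n hn => by
        simp only [mem_range] at hn
        rw [Nat.sub_sub_self (by omega)])]
  apply Finset.sum_congr rfl
  intro k hk
  rw [mem_range] at hk
  rw [← Finset.sum_mul, ← map_sum]
  congr 2
  exact (const_identity m k (by omega) (-27 : R)).symm

lemma two_not_square_mod3 : ¬ IsSquare (((2:ℤ)) : ZMod 3) := by decide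
lemma two_ne_zero_mod3 : (((2:ℤ)) : ZMod 3) ≠ 0 := by decide

end SS3Aux

open SS3Aux Finset

lemma mod3_cases (hp : 5 ≤ p) : p % 3 = 1 ∨ p % 3 = 2 := by
  have pp : p.Prime := Fact.out
  have h3 : p % 3 ≠ 0 := by
    intro h
    have : 3 ∣ p := Nat.dvd_of_mod_eq_zero h
    rcases (Nat.Prime.eq_one_or_self_of_dvd pp 3 this) with h' | h' <;> omega
  omega

lemma legendre_neg_three (hp : 5 ≤ p) :
    legendreSym p (-3) = if p % 3 = 1 then 1 else -1 := by
  have pp : p.Prime := Fact.out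
  haveI : Fact (Nat.Prime 3) := ⟨by norm_num⟩
  have hp2 : p ≠ 2 := by omega
  have hp3 : p ≠ 3 := by omega
  have hpodd : p % 2 = 1 := Nat.Prime.eq_two_or_odd pp |>.resolve_left hp2
  have h3Z : ((3 : ℤ) : ZMod p) ≠ 0 := by
    intro h
    rw [show ((3:ℤ) : ZMod p) = ((3:ℕ) : ZMod p) by push_cast; ring] at h
    rw [ZMod.natCast_eq_zero_iff] at h
    have := Nat.le_of_dvd (by norm_num) h
    omega
  have hrec := legendreSym.quadratic_reciprocity (p := p) (q := 3) hp2 (by norm_num)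
    (by omega)
  have h1 : legendreSym p (-3) = legendreSym p (-1) * legendreSym p 3 := by
    rw [show (-3 : ℤ) = -1 * 3 by ring, legendreSym.mul]
  have h2 : legendreSym p (-1) = (-1 : ℤ) ^ (p / 2) := by
    rw [legendreSym.at_neg_one hp2, ZMod.χ₄_eq_neg_one_pow hpodd]
  have hsq : legendreSym p 3 * legendreSym p 3 = 1 := by
    have := legendreSym.sq_one (p := p) (a := 3) h3Z
    rwa [pow_two] at this
  have hrec' : legendreSym 3 (p : ℤ) * legendreSym p 3 = (-1 : ℤ) ^ (p / 2) := by
    have : (3:ℕ)/2 = 1 := by norm_num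
    rw [this, mul_one] at hrec
    exact_mod_cast hrec
  have h4 : legendreSym p (-3) = legendreSym 3 p := by
    have e : legendreSym p (-3)
        = legendreSym 3 p * (legendreSym p 3 * legendreSym p 3) := by
      rw [h1, h2, ← hrec']; ring
    rwa [hsq, mul_one] at e
  rw [h4]
  have hmod : legendreSym 3 (p : ℤ) = legendreSym 3 ((p % 3 : ℕ) : ℤ) := by
    rw [legendreSym.mod]
    norm_cast
  rcases mod3_cases p hp with h | h
  · rw [if_pos h, hmod, h]
    exact legendreSym.eq_one_iff 3 (a := (1:ℤ)) (by norm_num) |>.2 (by exact IsSquare.one)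
  · rw [if_neg (by omega), hmod, h]
    have h2' : ((2:ℕ):ℤ) = (2:ℤ) := by norm_num
    have hns := two_not_square_mod3
    have hne := two_ne_zero_mod3
    rw [h2', legendreSym.eq_neg_one_iff_not_one 3 hne, legendreSym.eq_one_iff 3 hne]
    exact hns

lemma del_eq (hp : 5 ≤ p) : del p = p % 3 - 1 := by
  rw [del, legendre_neg_three p hp]
  rcases mod3_cases p hp with h | h
  · rw [if_pos h, h]; rfl
  · rw [if_neg (by omega), h]; rfl


/-! ### The polynomial Q and the structure of ss3Poly -/

/-- The "reversed" supersingular polynomial with integral coefficients. -/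
def Qpoly : (ZMod p)[X] :=
  ∑ n ∈ Finset.range (p / 3 + 1),
    C ((((p / 3).choose n * (p / 3 + n).choose n : ℕ) : ZMod p) * (-27) ^ n) * X ^ (p / 3 - n)

lemma Qpoly_Bform : Qpoly p =
    ∑ r ∈ Finset.range (p / 3 + 1),
      C (((p / 3).choose r : ZMod p) ^ 2 * (-27) ^ r) * (X - C 27) ^ (p / 3 - r) :=
  poly_identity (p / 3)

lemma pthree_ne_zero (hp : 5 ≤ p) : (3 : ZMod p) ≠ 0 := by
  have pp : p.Prime := Fact.out
  intro h
  rw [show (3 : ZMod p) = ((3:ℕ) : ZMod p) by push_cast; ring,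
    ZMod.natCast_eq_zero_iff] at h
  have := Nat.le_of_dvd (by norm_num) h
  omega

lemma twenty7_ne_zero (hp : 5 ≤ p) : (27 : ZMod p) ≠ 0 := by
  have h3 := pthree_ne_zero p hp
  intro h
  apply h3
  have : (27 : ZMod p) = 3 ^ 3 := by norm_num
  rw [this] at h
  exact pow_eq_zero_iff (by norm_num) |>.1 h

lemma factorial_ne_zero' (hp : 5 ≤ p) (n : ℕ) (hn : n ≤ p / 3) :
    ((n.factorial : ZMod p)) ≠ 0 := by
  have pp : p.Prime := Fact.out
  intro h
  rw [ZMod.natCast_eq_zero_iff] at h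
  have := (Nat.Prime.dvd_factorial pp).1 h
  have : p / 3 < p := by omega
  omega

lemma param_eq (hp : 5 ≤ p) :
    (2 : ZMod p) / 3 - (del p : ZMod p) / 3 = ((p / 3 + 1 : ℕ) : ZMod p) := by
  have h3 := pthree_ne_zero p hp
  have hdm : 3 * (p / 3) + p % 3 = p := Nat.div_add_mod p 3
  have hcast : ((3 * (p / 3) + p % 3 : ℕ) : ZMod p) = 0 := by
    rw [hdm]; exact ZMod.natCast_self p
  rw [div_sub_div_same, div_eq_iff h3]
  have hdel := del_eq p hp
  rcases mod3_cases p hp with h | h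
  · rw [h] at hcast
    rw [hdel, h]
    push_cast at hcast ⊢
    linear_combination -hcast
  · rw [h] at hcast
    rw [hdel, h]
    push_cast at hcast ⊢
    linear_combination -hcast

lemma coeff_eq (hp : 5 ≤ p) (n : ℕ) (hn : n ≤ p / 3) :
    poch p (-(p / 3 : ℕ) : ZMod p) n *
       poch p ((2 : ZMod p) / 3 - (del p : ZMod p) / 3) n /
       ((n.factorial : ZMod p)) ^ 2 * 27 ^ n
      = (((p / 3).choose n * (p / 3 + n).choose n : ℕ) : ZMod p) * (-27) ^ n := by
  have hfac := factorial_ne_zero' p hp n hn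
  have e1 : poch p (-(p / 3 : ℕ) : ZMod p) n
      = (-1) ^ n * ((n.factorial * (p / 3).choose n : ℕ) : ZMod p) := by
    rw [poch, ascPochhammer_eval_neg_eq_descPochhammer,
      descPochhammer_eval_eq_descFactorial, ← Nat.descFactorial_eq_factorial_mul_choose]
  have e2 : poch p ((2 : ZMod p) / 3 - (del p : ZMod p) / 3) n
      = ((n.factorial * (p / 3 + n).choose n : ℕ) : ZMod p) := by
    rw [poch, param_eq p hp, ← ascPochhammer_eval_cast,
      ascPochhammer_nat_eq_ascFactorial, Nat.ascFactorial_eq_factorial_mul_choose]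
  rw [e1, e2, neg_pow 27 n]
  push_cast
  field_simp

lemma ss3_eq (hp : 5 ≤ p) : ss3Poly p = X ^ (del p) * Qpoly p := by
  rw [ss3Poly, Qpoly, Finset.mul_sum]
  apply Finset.sum_congr rfl
  intro n hn
  rw [Finset.mem_range] at hn
  rw [coeff_eq p hp n (by omega),
    show p / 3 + del p - n = del p + (p / 3 - n) by omega, pow_add]
  ring


/-! ### Root counting -/

/-- W reduced mod p. -/
def Wp : (ZMod p)[X] := (W (p / 3)).map (Int.castRingHom (ZMod p))

lemma Wp_eq : Wp p = ∑ r ∈ Finset.range (p / 3 + 1),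
    C (((p / 3).choose r : ZMod p) ^ 2) * X ^ r := by
  rw [Wp, W, Polynomial.map_sum]
  apply Finset.sum_congr rfl
  intro r _
  rw [Polynomial.map_mul, Polynomial.map_pow, map_C, map_X]
  simp only [eq_intCast]
  push_cast
  ring

lemma evalW (y : ZMod p) : (Wp p).eval y
    = ∑ r ∈ Finset.range (p / 3 + 1), ((p / 3).choose r : ZMod p) ^ 2 * y ^ r := by
  rw [Wp_eq, eval_finset_sum]
  simp

lemma evalQ (x : ZMod p) : (Qpoly p).eval x
    = ∑ r ∈ Finset.range (p / 3 + 1),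
        ((p / 3).choose r : ZMod p) ^ 2 * (-27) ^ r * (x - 27) ^ (p / 3 - r) := by
  rw [Qpoly_Bform, eval_finset_sum]
  simp [mul_assoc]

lemma evalQ27 (hp : 5 ≤ p) : (Qpoly p).eval 27 = (-27 : ZMod p) ^ (p / 3) := by
  rw [evalQ, Finset.sum_eq_single (p / 3)]
  · simp
  · intro r hr hne
    rw [Finset.mem_range] at hr
    rw [sub_self, zero_pow (show p / 3 - r ≠ 0 by omega), mul_zero]
  · intro h
    exact absurd (Finset.self_mem_range_succ (p / 3)) h

lemma Qpoly_ne_zero (hp : 5 ≤ p) : Qpoly p ≠ 0 := by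
  intro h
  have h27 := twenty7_ne_zero p hp
  have := evalQ27 p hp
  rw [h, eval_zero] at this
  exact pow_ne_zero _ (neg_ne_zero.2 h27) this.symm

lemma evalQ0 (hp : 5 ≤ p) : (Qpoly p).eval 0 ≠ 0 := by
  have pp : p.Prime := Fact.out
  have h27 := twenty7_ne_zero p hp
  rw [Qpoly, eval_finset_sum]
  have : ∀ n ∈ Finset.range (p / 3 + 1),
      (C ((((p / 3).choose n * (p / 3 + n).choose n : ℕ) : ZMod p) * (-27) ^ n)
        * X ^ (p / 3 - n) : (ZMod p)[X]).eval 0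
      = if n = p / 3 then
          ((((p / 3) + (p / 3)).choose (p / 3) : ℕ) : ZMod p) * (-27) ^ (p / 3) else 0 := by
    intro n hn
    rw [Finset.mem_range] at hn
    by_cases h : n = p / 3
    · subst h
      simp
    · rw [if_neg h]
      simp [zero_pow (show p / 3 - n ≠ 0 by omega)]
  rw [Finset.sum_congr rfl this, Finset.sum_ite_eq' (Finset.range (p / 3 + 1)) (p / 3),
    if_pos (Finset.self_mem_range_succ (p / 3))]
  apply mul_ne_zero
  · intro h
    rw [ZMod.natCast_eq_zero_iff] at h
    have hdvd : p ∣ (p / 3 + p / 3).factorial := by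
      have e := Nat.choose_mul_factorial_mul_factorial (Nat.le_add_left (p / 3) (p / 3))
      rw [Nat.add_sub_cancel] at e
      rw [← e]
      exact Dvd.dvd.mul_right (Dvd.dvd.mul_right h _) _
    have := (Nat.Prime.dvd_factorial pp).1 hdvd
    have : p / 3 + p / 3 < p := by omega
    omega
  · exact pow_ne_zero _ (neg_ne_zero.2 h27)

lemma evalW0 : (Wp p).eval 0 = 1 := by
  rw [evalW, Finset.sum_eq_single 0]
  · simp
  · intro r hr hne
    rw [zero_pow hne, mul_zero]
  · intro h
    exact absurd (Finset.mem_range.2 (by omega)) h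

lemma Wp_ne_zero : Wp p ≠ 0 := by
  intro h
  have := evalW0 p
  rw [h, eval_zero] at this
  exact one_ne_zero this.symm

lemma bridge (hp : 5 ≤ p) (x : ZMod p) (hx : x ≠ 27) :
    (Qpoly p).eval x = (x - 27) ^ (p / 3) * (Wp p).eval (-27 / (x - 27)) := by
  have hxs : x - 27 ≠ 0 := sub_ne_zero.2 hx
  rw [evalQ, evalW, Finset.mul_sum]
  apply Finset.sum_congr rfl
  intro r hr
  rw [Finset.mem_range] at hr
  have hpow : (x - 27) ^ (p / 3 - r) * (x - 27) ^ r = (x - 27) ^ (p / 3) := by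
    rw [← pow_add]; congr 1; omega
  rw [div_pow, ← hpow]
  field_simp

lemma card_roots_eq (hp : 5 ≤ p) :
    (Qpoly p).roots.toFinset.card = (Wp p).roots.toFinset.card := by
  have h27 := twenty7_ne_zero p hp
  have hQne := Qpoly_ne_zero p hp
  have hWne := Wp_ne_zero p
  have memQ : ∀ x, x ∈ (Qpoly p).roots.toFinset ↔ (Qpoly p).eval x = 0 := by
    intro x
    rw [Multiset.mem_toFinset, mem_roots hQne, IsRoot.def]
  have memW : ∀ y, y ∈ (Wp p).roots.toFinset ↔ (Wp p).eval y = 0 := by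
    intro y
    rw [Multiset.mem_toFinset, mem_roots hWne, IsRoot.def]
  have hne27 : ∀ x, (Qpoly p).eval x = 0 → x ≠ 27 := by
    intro x hx h
    rw [h, evalQ27 p hp] at hx
    exact pow_ne_zero _ (neg_ne_zero.2 h27) hx
  have hne0 : ∀ y, (Wp p).eval y = 0 → y ≠ 0 := by
    intro y hy h
    rw [h, evalW0] at hy
    exact one_ne_zero hy
  refine Finset.card_bij' (fun x _ => -27 / (x - 27)) (fun y _ => 27 - 27 / y)
    ?hi ?hj ?left ?right
  case hi =>
    intro x hx
    simp only [memQ, memW] at hx ⊢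
    have hx27 := hne27 x hx
    have hb := bridge p hp x hx27
    rw [hx] at hb
    rcases mul_eq_zero.1 hb.symm with h | h
    · exact absurd h (pow_ne_zero _ (sub_ne_zero.2 hx27))
    · exact h
  case hj =>
    intro y hy
    simp only [memQ, memW] at hy ⊢
    have hy0 := hne0 y hy
    have hx27 : (27 : ZMod p) - 27 / y ≠ 27 := by
      intro h
      have h' : (27 : ZMod p) / y = 0 := by linear_combination -h
      rcases div_eq_zero_iff.1 h' with h'' | h''
      · exact h27 h''
      · exact hy0 (inv_eq_zero.mp (by simpa using h''))
    have harg : -27 / ((27 : ZMod p) - 27 / y - 27) = y := by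
      rw [show (27 : ZMod p) - 27 / y - 27 = -(27 / y) by ring, div_neg,
        div_div_eq_mul_div, neg_mul, neg_div, neg_neg, mul_comm, mul_div_assoc,
        div_self h27, mul_one]
    rw [bridge p hp _ hx27, harg, hy, mul_zero]
  case left =>
    intro x hx
    simp only [memQ] at hx
    have hx27 := hne27 x hx
    have hxs : x - 27 ≠ 0 := sub_ne_zero.2 hx27
    rw [div_div_eq_mul_div, div_neg, mul_comm (27 : ZMod p) (x - 27),
      mul_div_assoc, div_self h27, mul_one]
    ring
  case right =>
    intro y hy
    simp only [memW] at hy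
    have hy0 := hne0 y hy
    rw [show (27 : ZMod p) - 27 / y - 27 = -(27 / y) by ring, div_neg,
      div_div_eq_mul_div, neg_mul, neg_div, neg_neg, mul_comm, mul_div_assoc,
      div_self h27, mul_one]

/-- For every prime p ≥ 5, the number L^{(3)}(p) of distinct roots of ss_p^{(3)}(X) in 𝔽_p
satisfies L^{(3)}(p) = N₁(p, ⌊p/3⌋) + δ. -/
theorem L3_eq_N1_add_del (hp : 5 ≤ p) :
    L3 p = N1 p (p / 3) + del p := by
  have hQne := Qpoly_ne_zero p hp
  have hN : N1 p (p / 3) = (Wp p).roots.toFinset.card := rfl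
  have hδ : del p = 0 ∨ del p = 1 := by
    have := del_eq p hp
    rcases mod3_cases p hp with h | h <;> omega
  rw [L3, ss3_eq p hp, hN]
  rcases hδ with h | h
  · rw [h, pow_zero, one_mul, card_roots_eq p hp, add_zero]
  · rw [h, pow_one, roots_mul (mul_ne_zero X_ne_zero hQne), roots_X,
      Multiset.toFinset_add, Multiset.toFinset_singleton]
    have h0 : (0 : ZMod p) ∉ (Qpoly p).roots.toFinset := by
      rw [Multiset.mem_toFinset, mem_roots hQne, IsRoot.def]
      exact evalQ0 p hp
    rw [Finset.card_union_of_disjoint (Finset.disjoint_singleton_left.2 h0),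
      Finset.card_singleton, card_roots_eq p hp]
    omega
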